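/- Let g, γ be real numbers with g ≠ 0, gγ > −2, g + n ≠ 0 and gγ + n ≠ 0 for all n ≥ 0, let u^{(g,γ)} be the quasi-definite Bessel–Laguerre bivariate moment functional, and let λ ∈ ℝ be such that λ_n = 1 + λ(−1)^n (g)_n/(n! g Γ(gγ)) ≠ 0 for all n ≥ 0, so that v^{(g,γ)} = u^{(g,γ)} + λ δ_{(0,0)} is quasi-definite. Then the orthogonal polynomials of v^{(g,γ)} obtained from the Uvarov connection formula satisfy Q^{(g,γ)}_{n,m}(x,y) = P^{(g,γ)}_{n,m}(x,y) for all 0 < m ≤ n, while Q^{(g,γ)}_{n,0}(x,y) = B_n^{(g,−g)}(x) − ( λ̃ / (1 + λ̃ K_{n−1}(b^{(g,−g)}; 0, 0)) ) K_{n−1}(b^{(g,−g)}; 0, x), where λ̃ = λ/Γ(gγ); that is, Q^{(g,γ)}_{n,0} depends only on x and coincides with the n-th orthogonal polynomial of the univariate Uvarov modification b^{(g,−g)} + λ̃ δ_0 of the Bessel moment functional. -/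

import Mathlib

open MvPolynomial Matrix

/-- The index set for monomials of total degree `n` in `d` variables:
multi-indices (exponent tuples) summing to `n`. Its cardinality is `r_n^d = C(n+d-1,n)`. -/
abbrev Idx (d n : ℕ) : Type := {ν : Fin d → ℕ // ν ∈ Finset.Nat.antidiagonalTuple d n}

/-- The monomial `x^ν` associated with a multi-index `ν` of total degree `n`;
the family `fun α : Idx d n => monIdx α` is the canonical vector `𝕏_n`. -/
noncomputable def monIdx {d n : ℕ} (α : Idx d n) : MvPolynomial (Fin d) ℝ :=
  MvPolynomial.monomial (Finsupp.equivFunOnFinite.symm α.1) 1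

/-- A polynomial system (PS): a sequence of vectors `ℙ_n` of size `r_n^d` whose
entries are polynomials of total degree `n`, the entries of `ℙ_0,…,ℙ_n` forming a
basis of the polynomials of total degree at most `n`. -/
structure PolySystem (d : ℕ) where
  vec : (n : ℕ) → Idx d n → MvPolynomial (Fin d) ℝ
  degree_eq : ∀ n α, (vec n α).totalDegree = n
  indep : LinearIndependent ℝ (fun p : (Σ n : ℕ, Idx d n) => vec p.1 p.2)
  spans : ∀ (n : ℕ) (p : MvPolynomial (Fin d) ℝ), p.totalDegree ≤ n →
    p ∈ Submodule.span ℝ {q | ∃ m ≤ n, ∃ α : Idx d m, q = vec m α}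

/-- `{ℙ_n}` is an orthogonal polynomial system (OPS) with respect to the moment
functional `u` : `⟨u, 𝕏_m ℙ_n^t⟩ = 0` for `m < n` and `⟨u, 𝕏_n ℙ_n^t⟩` nonsingular. -/
def IsOPS {d : ℕ} (u : MvPolynomial (Fin d) ℝ →ₗ[ℝ] ℝ) (P : PolySystem d) : Prop :=
  (∀ m n : ℕ, m < n → ∀ (α : Idx d m) (β : Idx d n), u (monIdx α * P.vec n β) = 0) ∧
  (∀ n : ℕ, IsUnit (Matrix.of fun α β : Idx d n => u (monIdx α * P.vec n β)).det)

/-- `u` is quasi-definite iff it admits an OPS. -/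
def QuasiDefinite {d : ℕ} (u : MvPolynomial (Fin d) ℝ →ₗ[ℝ] ℝ) : Prop :=
  ∃ P : PolySystem d, IsOPS u P

/-- `H_n = ⟨u, ℙ_n ℙ_n^t⟩`. -/
noncomputable def Hmat {d : ℕ} (u : MvPolynomial (Fin d) ℝ →ₗ[ℝ] ℝ) (P : PolySystem d)
    (n : ℕ) : Matrix (Idx d n) (Idx d n) ℝ :=
  Matrix.of fun α β => u (P.vec n α * P.vec n β)

/-- `P_m(u;x,y) = ℙ_m(x)^t H_m⁻¹ ℙ_m(y)`. -/
noncomputable def kerP {d : ℕ} (u : MvPolynomial (Fin d) ℝ →ₗ[ℝ] ℝ) (P : PolySystem d)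
    (m : ℕ) (x y : Fin d → ℝ) : ℝ :=
  ∑ α, ∑ β, eval x (P.vec m α) * (Hmat u P m)⁻¹ α β * eval y (P.vec m β)

/-- `kerLT u P n = K_{n-1}(u;·,·) = Σ_{m<n} P_m(u;·,·)`, so that `kerLT u P 0 = K_{-1} = 0`. -/
noncomputable def kerLT {d : ℕ} (u : MvPolynomial (Fin d) ℝ →ₗ[ℝ] ℝ) (P : PolySystem d)
    (n : ℕ) (x y : Fin d → ℝ) : ℝ :=
  ∑ m ∈ Finset.range n, kerP u P m x y

/-- `𝖯_n(ξ) = (ℙ_n(ξ_1)|⋯|ℙ_n(ξ_N))`. -/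
noncomputable def Pmat {d N : ℕ} (P : PolySystem d) (ξ : Fin N → (Fin d → ℝ)) (n : ℕ) :
    Matrix (Idx d n) (Fin N) ℝ :=
  Matrix.of fun α i => eval (ξ i) (P.vec n α)

/-- `Kmat u P ξ n = 𝒦_{n-1} = (K_{n-1}(u;ξ_i,ξ_j))_{i,j}`, with `𝒦_{-1} = 0`. -/
noncomputable def Kmat {d N : ℕ} (u : MvPolynomial (Fin d) ℝ →ₗ[ℝ] ℝ) (P : PolySystem d)
    (ξ : Fin N → (Fin d → ℝ)) (n : ℕ) : Matrix (Fin N) (Fin N) ℝ :=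
  Matrix.of fun i j => kerLT u P n (ξ i) (ξ j)

/-- `Kvec u P ξ n x = 𝖪_{n-1}(ξ,x) = (K_{n-1}(u;ξ_1,x),…,K_{n-1}(u;ξ_N,x))^t`, with `𝖪_{-1}=0`. -/
noncomputable def Kvec {d N : ℕ} (u : MvPolynomial (Fin d) ℝ →ₗ[ℝ] ℝ) (P : PolySystem d)
    (ξ : Fin N → (Fin d → ℝ)) (n : ℕ) (x : Fin d → ℝ) : Fin N → ℝ :=
  fun i => kerLT u P n (ξ i) x

/-- A PS is monic if the degree-`n` homogeneous part of the entry of `ℙ_n` indexed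
by `α` is exactly the monomial `x^α`. -/
def PolySystem.IsMonic {d : ℕ} (P : PolySystem d) : Prop :=
  ∀ (n : ℕ) (α : Idx d n) (ν : Fin d →₀ ℕ), (ν.sum fun _ e => e) = n →
    MvPolynomial.coeff ν (P.vec n α) = if ν = Finsupp.equivFunOnFinite.symm α.1 then 1 else 0

/-- Multiplication of a real matrix times a vector of polynomials. -/
noncomputable def matVec {d : ℕ} {a b : Type} [Fintype b] (M : Matrix a b ℝ)
    (w : b → MvPolynomial (Fin d) ℝ) (i : a) : MvPolynomial (Fin d) ℝ :=
  ∑ j, M i j • w j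

/-- The matrix `L_{n,i}` determined by `x_i 𝕏_n = L_{n,i} 𝕏_{n+1}`. -/
noncomputable def Lmat (d n : ℕ) (i : Fin d) : Matrix (Idx d n) (Idx d (n + 1)) ℝ :=
  Matrix.of fun α β => if β.1 = (fun j => α.1 j + if j = i then 1 else 0) then 1 else 0

/-- The unique multi-index of degree 0. -/
def zeroIdx {d : ℕ} : Idx d 0 :=
  ⟨fun _ => 0, by simp [Finset.Nat.mem_antidiagonalTuple]⟩

/-- The degree-2 multi-index `e_i + e_j`. -/
def e2 {d : ℕ} (i j : Fin d) : Idx d 2 :=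
  ⟨fun k => (if k = i then 1 else 0) + (if k = j then 1 else 0), by
    simp [Finset.Nat.mem_antidiagonalTuple, Finset.sum_add_distrib]⟩

/-- `A_{h,2} = Σ_{1≤i≤j≤d} a^{(2)}_{ij} L_{h,j} L_{h+1,i}`. -/
noncomputable def Amat2 {d : ℕ} (a2 : Idx d 2 → ℝ) (h : ℕ) :
    Matrix (Idx d h) (Idx d (h + 2)) ℝ :=
  ∑ i : Fin d, ∑ j : Fin d,
    if i ≤ j then a2 (e2 i j) • (Lmat d h j * Lmat d (h + 1) i) else 0

/-- The polynomial `λ(x) = a_2·𝕏_2 + a_1·𝕏_1 + a_0`. -/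
noncomputable def lamPoly {d : ℕ} (a2 : Idx d 2 → ℝ) (a1 : Idx d 1 → ℝ) (a0 : ℝ) :
    MvPolynomial (Fin d) ℝ :=
  (∑ α : Idx d 2, a2 α • monIdx α) + (∑ α : Idx d 1, a1 α • monIdx α) + MvPolynomial.C a0

/-- Generalized binomial coefficient `C(a,k) = a(a-1)⋯(a-k+1)/k!` for real `a`. -/
noncomputable def genBinom (a : ℝ) (k : ℕ) : ℝ :=
  (∏ j ∈ Finset.range k, (a - j)) / (Nat.factorial k)

/-- The Pochhammer symbol `(a)_m = a(a+1)⋯(a+m-1)`. -/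
noncomputable def poch (a : ℝ) (m : ℕ) : ℝ := (ascPochhammer ℝ m).eval a

/-- The classical Bessel polynomial `B_n^{(a,b)}(z) = Σ_{k=0}^n C(n,k)(n+a-1)_k (z/b)^k`,
normalized by `B_n^{(a,b)}(0) = 1`. -/
noncomputable def besselPoly (a b : ℝ) (n : ℕ) : Polynomial ℝ :=
  ∑ k ∈ Finset.range (n + 1),
    Polynomial.C ((n.choose k : ℝ) * poch ((n : ℝ) + a - 1) k * (1 / b) ^ k) *
      Polynomial.X ^ k

/-- `h_n^{(a,b)} = (-1)^{n+1} n! b / ((2n+a-1)(a)_{n-1})`, written with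
`(a)_{n-1} = (a)_n/(a+n-1)` so that it is also meaningful for `n = 0`. -/
noncomputable def hBessel (a b : ℝ) (n : ℕ) : ℝ :=
  (-1) ^ (n + 1) * (Nat.factorial n : ℝ) * b * (a + (n : ℝ) - 1) /
    ((2 * (n : ℝ) + a - 1) * poch a n)

/-- `h_m^{(α)} = Γ(α+m+1)/m!`, the squared norm of the Laguerre polynomial `L_m^{(α)}`. -/
noncomputable def hLag (α : ℝ) (m : ℕ) : ℝ :=
  Real.Gamma (α + (m : ℝ) + 1) / (Nat.factorial m : ℝ)

/-- The coefficient of `t^k` in the Laguerre polynomial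
`L_m^{(α)}(t) = Σ_{k=0}^m (-1)^k C(m+α,m-k) t^k/k!`. -/
noncomputable def lagCoef (α : ℝ) (m k : ℕ) : ℝ :=
  (-1) ^ k * genBinom ((m : ℝ) + α) (m - k) / (Nat.factorial k : ℝ)

/-- The bivariate polynomial `x^m L_m^{(α)}(g y/x) = Σ_k c_k g^k y^k x^{m-k}`. -/
noncomputable def lagHomog (g α : ℝ) (m : ℕ) : MvPolynomial (Fin 2) ℝ :=
  ∑ k ∈ Finset.range (m + 1), (lagCoef α m k * g ^ k) • (X 1 ^ k * X 0 ^ (m - k))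

/-- `B_n^{(a,b)}(x)` as a bivariate polynomial in the first variable. -/
noncomputable def besselInX (a b : ℝ) (n : ℕ) : MvPolynomial (Fin 2) ℝ :=
  Polynomial.aeval (X 0 : MvPolynomial (Fin 2) ℝ) (besselPoly a b n)

/-- The Bessel–Laguerre polynomial
`P^{(g,γ)}_{n,m}(x,y) = B_{n-m}^{(g+2m,-g)}(x) x^m L_m^{(gγ-1)}(gy/x)`. -/
noncomputable def PBL (g γ : ℝ) (n m : ℕ) : MvPolynomial (Fin 2) ℝ :=
  besselInX (g + 2 * (m : ℝ)) (-g) (n - m) * lagHomog g (g * γ - 1) m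

/-- `h^{(g,γ)}_{n,m} = h_{n-m}^{(g+2m,-g)} h_m^{(gγ-1)}`. -/
noncomputable def hBL (g γ : ℝ) (n m : ℕ) : ℝ :=
  hBessel (g + 2 * (m : ℝ)) (-g) (n - m) * hLag (g * γ - 1) m

/-- The kernel `K_n(u^{(g,γ)};(0,0),·)` built from the Bessel–Laguerre OPS, evaluated
at a point. -/
noncomputable def kerBL (g γ : ℝ) (n : ℕ) (p : Fin 2 → ℝ) : ℝ :=
  ∑ m ∈ Finset.range (n + 1), ∑ k ∈ Finset.range (m + 1),
    eval (fun _ => 0) (PBL g γ m k) * eval p (PBL g γ m k) / hBL g γ m k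

/-- The kernel `K_{n-1}(u^{(g,γ)};(0,0),·)` as a bivariate polynomial (`= 0` for `n = 0`). -/
noncomputable def kerBLPolyLT (g γ : ℝ) (n : ℕ) : MvPolynomial (Fin 2) ℝ :=
  ∑ m ∈ Finset.range n, ∑ k ∈ Finset.range (m + 1),
    (eval (fun _ => 0) (PBL g γ m k) / hBL g γ m k) • PBL g γ m k

/-- The univariate Bessel kernel `K_{n-1}(b^{(a,b)};0,·)` as a polynomial. -/
noncomputable def kerBesselPolyLT (a b : ℝ) (n : ℕ) : Polynomial ℝ :=
  ∑ m ∈ Finset.range n,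
    Polynomial.C ((besselPoly a b m).eval 0 / hBessel a b m) * besselPoly a b m

/-- The orthogonal polynomials of the Uvarov modification `v^{(g,γ)} = u^{(g,γ)} + λδ_{(0,0)}`
obtained from the Uvarov connection formula
`Q_{n,m} = P_{n,m} - (λ P_{n,m}(0,0)/λ_{n-1}) K_{n-1}(u^{(g,γ)};(0,0),·)`. -/
noncomputable def QBL (g γ lam : ℝ) (n m : ℕ) : MvPolynomial (Fin 2) ℝ :=
  PBL g γ n m -
    (lam * eval (fun _ => 0) (PBL g γ n m) /
      (1 + lam * eval (fun _ => 0) (kerBLPolyLT g γ n))) • kerBLPolyLT g γ n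

/-!
Since `x^m L_m^{(gγ-1)}(gy/x)` is homogeneous of degree `m`, `P_{n,m}(0,0) = 0` for `m > 0`,
while `P_{n,0}(x,y) = B_n^{(g,-g)}(x)` with `B_n(0) = 1`. So the Uvarov correction leaves
`P_{n,m}`, `m > 0`, untouched, and `K_{n-1}(u;(0,0),·) = Γ(gγ)⁻¹ K_{n-1}(b;0,x)` turns `Q_{n,0}`
into the univariate Uvarov polynomial of `b + λ̃ δ_0`. Its orthogonality is the one-point Uvarov
theorem: against `B_m`, `m < n`, the functional contributes `-c` and the mass
`λ̃ (1 - c K_{n-1}(0,0))`, which cancel by the choice of the coefficient `c`. It is well defined as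
`Σ_{m<n} 1/h_m = (-1)^{n-1}(g)_{n-1}/((n-1)! g)` telescopes, so `1 + λ̃ K_{n-1}(0,0) = λ_{n-1}`.
-/

namespace Polynomial

variable {K : Type*} [Field K]

lemma Sequence.isUnit_leadingCoeff (S : Sequence K) (i : ℕ) : IsUnit (S i).leadingCoeff :=
  isUnit_iff_ne_zero.2 (leadingCoeff_ne_zero.2 (S.ne_zero i))

/-- `K_{n-1}(a, ·)`, the kernel of the orthogonal family `P` with squared norms `h`. -/
noncomputable def kernelLT (P : ℕ → K[X]) (h : ℕ → K) (a : K) (n : ℕ) : K[X] :=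
  ∑ m ∈ Finset.range n, C ((P m).eval a / h m) * P m

/-- The `n`-th polynomial of the Uvarov modification `L + λ δ_a`. -/
noncomputable def uvarovPoly (P : ℕ → K[X]) (h : ℕ → K) (lam a : K) (n : ℕ) : K[X] :=
  P n - C (lam * (P n).eval a / (1 + lam * (kernelLT P h a n).eval a)) * kernelLT P h a n

lemma apply_kernelLT_mul {P : ℕ → K[X]} {h : ℕ → K} {L : K[X] →ₗ[K] K}
    (horth : ∀ n m, n ≠ m → L (P n * P m) = 0) (hnorm : ∀ n, L (P n * P n) = h n)
    (hh : ∀ m, h m ≠ 0) (a : K) {n m : ℕ} (hm : m < n) :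
    L (kernelLT P h a n * P m) = (P m).eval a := by
  rw [kernelLT, Finset.sum_mul, map_sum, Finset.sum_eq_single_of_mem m (Finset.mem_range.2 hm)]
  · rw [mul_assoc, ← smul_eq_C_mul, map_smul, hnorm, smul_eq_mul, div_mul_cancel₀ _ (hh m)]
  · intro j _ hjm
    rw [mul_assoc, ← smul_eq_C_mul, map_smul, horth j m hjm, smul_zero]

theorem apply_uvarovPoly_mul_add_eval_eq_zero {P : ℕ → K[X]} {h : ℕ → K} {L : K[X] →ₗ[K] K}
    (hdeg : ∀ i, (P i).degree = i)
    (horth : ∀ n m, n ≠ m → L (P n * P m) = 0) (hnorm : ∀ n, L (P n * P n) = h n)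
    (hh : ∀ m, h m ≠ 0) {lam a : K} {n : ℕ}
    (hΔ : 1 + lam * (kernelLT P h a n).eval a ≠ 0) {p : K[X]} (hp : p.degree < n) :
    L (uvarovPoly P h lam a n * p) + lam * (uvarovPoly P h lam a n * p).eval a = 0 := by
  set Q := uvarovPoly P h lam a n
  set c := lam * (P n).eval a / (1 + lam * (kernelLT P h a n).eval a)
  have hQ : Q = P n - c • kernelLT P h a n := by rw [smul_eq_C_mul]; rfl
  let M : K[X] →ₗ[K] K := (L + lam • leval a) ∘ₗ LinearMap.mulLeft K Q
  have hM : ∀ q, M q = L (Q * q) + lam * (Q * q).eval a := fun q => rfl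
  suffices degreeLT K n ≤ LinearMap.ker M from hM p ▸ this (mem_degreeLT.2 hp)
  let S : Sequence K := ⟨P, hdeg⟩
  rw [← S.span_degreeLT fun i _ => S.isUnit_leadingCoeff i, Submodule.span_le]
  rintro _ ⟨m, hm, rfl⟩
  have hm : m < n := hm
  have hL : L (Q * P m) = -(c * (P m).eval a) := by
    rw [hQ, sub_mul, smul_mul_assoc, map_sub, map_smul, horth n m hm.ne',
      apply_kernelLT_mul horth hnorm hh a hm, smul_eq_mul, zero_sub]
  have hc : c * (1 + lam * (kernelLT P h a n).eval a) = lam * (P n).eval a :=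
    div_mul_cancel₀ _ hΔ
  rw [SetLike.mem_coe, LinearMap.mem_ker, hM, hL, hQ]
  simp only [eval_mul, eval_sub, eval_smul, smul_eq_mul]
  linear_combination -(P m).eval a * hc

end Polynomial

lemma poch_ne_zero {x : ℝ} {m : ℕ} (h : ∀ k < m, x + k ≠ 0) : poch x m ≠ 0 := by
  rw [poch, Ne, ascPochhammer_eval_eq_zero_iff]
  rintro ⟨k, hk, hkx⟩
  exact h k hk (by rw [hkx, add_neg_cancel])

lemma poch_succ (x : ℝ) (n : ℕ) : poch x (n + 1) = poch x n * (x + n) :=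
  ascPochhammer_succ_eval n x

lemma besselPoly_zero (a b : ℝ) : besselPoly a b 0 = 1 := by
  simp [besselPoly, poch]

lemma besselPoly_eval_zero (a b : ℝ) (n : ℕ) : (besselPoly a b n).eval 0 = 1 := by
  rw [besselPoly, Polynomial.eval_finsetSum,
    Finset.sum_eq_single_of_mem 0 (Finset.mem_range.2 n.succ_pos)]
  · simp [poch]
  · intro k _ hk
    simp [zero_pow hk]

lemma besselPoly_coeff (a b : ℝ) (n k : ℕ) : (besselPoly a b n).coeff k =
    if k < n + 1 then (n.choose k : ℝ) * poch ((n : ℝ) + a - 1) k * (1 / b) ^ k else 0 := by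
  simp only [besselPoly, Polynomial.finsetSum_coeff, Polynomial.coeff_C_mul_X_pow,
    Finset.sum_ite_eq, Finset.mem_range]

lemma degree_besselPoly_neg {g : ℝ} (hg : g ≠ 0) (hgn : ∀ n : ℕ, g + (n : ℝ) ≠ 0) (n : ℕ) :
    (besselPoly g (-g) n).degree = n := by
  refine Polynomial.degree_eq_of_le_of_coeff_ne_zero ?_ ?_
  · exact Polynomial.degree_le_iff_coeff_zero _ _ |>.2 fun k hk => by
      rw [besselPoly_coeff, if_neg (Nat.not_lt.2 (Nat.succ_le_of_lt (by exact_mod_cast hk)))]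
  · rw [besselPoly_coeff, if_pos n.lt_succ_self]
    refine mul_ne_zero (mul_ne_zero (by simp) (poch_ne_zero fun k hk => ?_)) (by simp [hg])
    obtain ⟨n, rfl⟩ := Nat.exists_eq_add_of_lt hk
    convert hgn (n + k + k) using 1
    push_cast; ring

lemma add_natCast_sub_one_ne_zero {g : ℝ} (hg1 : g ≠ 1) (hgn : ∀ n : ℕ, g + (n : ℝ) ≠ 0)
    (k : ℕ) : g + k - 1 ≠ 0 := by
  cases k with
  | zero => simpa [sub_eq_zero] using hg1
  | succ k => convert hgn k using 1; push_cast; ring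

lemma hBessel_neg_ne_zero {g : ℝ} (hg : g ≠ 0) (hg1 : g ≠ 1) (hgn : ∀ n : ℕ, g + (n : ℝ) ≠ 0)
    (m : ℕ) : hBessel g (-g) m ≠ 0 := by
  have h2m : 2 * (m : ℝ) + g - 1 ≠ 0 := by
    simpa [add_comm, mul_comm] using add_natCast_sub_one_ne_zero hg1 hgn (2 * m)
  refine div_ne_zero ?_ (mul_ne_zero h2m (poch_ne_zero fun k _ => hgn k))
  exact mul_ne_zero (by simp [hg, m.factorial_ne_zero]) (add_natCast_sub_one_ne_zero hg1 hgn m)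

lemma hBessel_neg_zero {g : ℝ} (hg1 : g ≠ 1) : hBessel g (-g) 0 = g := by
  have : g - 1 ≠ 0 := sub_ne_zero.2 hg1
  simp only [hBessel, poch, ascPochhammer_zero, Polynomial.eval_one, Nat.factorial_zero,
    CharP.cast_eq_zero, mul_zero, add_zero, zero_add]
  field_simp
  ring

lemma sum_range_succ_inv_hBessel_neg {g : ℝ} (hg : g ≠ 0) (hg1 : g ≠ 1)
    (hgn : ∀ n : ℕ, g + (n : ℝ) ≠ 0) (n : ℕ) :
    ∑ m ∈ Finset.range (n + 1), (hBessel g (-g) m)⁻¹ =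
      (-1) ^ n * poch g n / ((n.factorial : ℝ) * g) := by
  induction n with
  | zero => simp [hBessel_neg_zero hg1, poch]
  | succ n ih =>
    have hpoch := poch_ne_zero (x := g) (m := n) fun k _ => hgn k
    have hfac : (n.factorial : ℝ) ≠ 0 := by exact_mod_cast n.factorial_ne_zero
    have hgn' : g + ((n : ℝ) + 1) - 1 ≠ 0 := by convert hgn n using 1; ring
    have h2n : 2 * ((n : ℝ) + 1) + g - 1 ≠ 0 := by
      convert hgn (2 * n + 1) using 1; push_cast; ring
    rw [Finset.sum_range_succ, ih, hBessel, poch_succ, Nat.factorial_succ, pow_succ, pow_succ]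
    push_cast
    rcases n.even_or_odd with hn | hn <;> rw [hn.neg_one_pow] <;> field_simp <;> ring

lemma MvPolynomial.eval_aeval_X {R σ : Type*} [CommSemiring R] (v : σ → R) (i : σ)
    (q : Polynomial R) : eval v (Polynomial.aeval (X i : MvPolynomial σ R) q) = q.eval (v i) := by
  simpa [Polynomial.aeval_def] using (Polynomial.aeval_algHom_apply (aeval v) (X i) q).symm

lemma lagHomog_zero (g α : ℝ) : lagHomog g α 0 = 1 := by
  simp [lagHomog, lagCoef, genBinom]

/-- `x^m L_m(g y / x)` is homogeneous of degree `m`, so it vanishes at the origin for `m > 0`. -/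
lemma eval_zero_lagHomog {m : ℕ} (g α : ℝ) (hm : m ≠ 0) :
    eval (fun _ => 0) (lagHomog g α m) = 0 := by
  refine (map_sum _ _ _).trans (Finset.sum_eq_zero fun k hk => ?_)
  have : k ≠ 0 ∨ m - k ≠ 0 := by omega
  rcases this with hk | hk <;> simp [smul_eq_C_mul, zero_pow hk]

lemma PBL_zero (g γ : ℝ) (n : ℕ) :
    PBL g γ n 0 = Polynomial.aeval (X 0 : MvPolynomial (Fin 2) ℝ) (besselPoly g (-g) n) := by
  simp [PBL, besselInX, lagHomog_zero]

lemma eval_zero_PBL_zero (g γ : ℝ) (n : ℕ) : eval (fun _ => 0) (PBL g γ n 0) = 1 := by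
  rw [PBL_zero, eval_aeval_X, besselPoly_eval_zero]

lemma eval_zero_PBL {m : ℕ} (g γ : ℝ) (n : ℕ) (hm : m ≠ 0) :
    eval (fun _ => 0) (PBL g γ n m) = 0 := by
  rw [PBL, map_mul, eval_zero_lagHomog g _ hm, mul_zero]

lemma hBL_zero (g γ : ℝ) (n : ℕ) : hBL g γ n 0 = hBessel g (-g) n * Real.Gamma (g * γ) := by
  simp [hBL, hLag]

lemma kerBLPolyLT_eq (g γ : ℝ) (n : ℕ) :
    kerBLPolyLT g γ n = (Real.Gamma (g * γ))⁻¹ •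
      Polynomial.aeval (X 0 : MvPolynomial (Fin 2) ℝ) (kerBesselPolyLT g (-g) n) := by
  rw [kerBLPolyLT, kerBesselPolyLT, map_sum, Finset.smul_sum]
  refine Finset.sum_congr rfl fun m _ => ?_
  rw [Finset.sum_eq_single_of_mem 0 (Finset.mem_range.2 m.succ_pos) fun k _ hk => by
    rw [eval_zero_PBL g γ m hk, zero_div, zero_smul]]
  rw [eval_zero_PBL_zero, PBL_zero, hBL_zero, map_mul,
    Polynomial.aeval_C, besselPoly_eval_zero, algebraMap_eq, ← smul_eq_C_mul, smul_smul,
    one_div, one_div, _root_.mul_inv_rev]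

lemma QBL_of_ne_zero {m : ℕ} (g γ lam : ℝ) (n : ℕ) (hm : m ≠ 0) :
    QBL g γ lam n m = PBL g γ n m := by
  rw [QBL, eval_zero_PBL g γ n hm, mul_zero, zero_div,
    zero_smul, sub_zero]

lemma QBL_zero (g γ lam : ℝ) (n : ℕ) :
    QBL g γ lam n 0 = Polynomial.aeval (X 0 : MvPolynomial (Fin 2) ℝ)
      (besselPoly g (-g) n -
        Polynomial.C ((lam / Real.Gamma (g * γ)) /
            (1 + (lam / Real.Gamma (g * γ)) * (kerBesselPolyLT g (-g) n).eval 0)) *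
          kerBesselPolyLT g (-g) n) := by
  rw [QBL, eval_zero_PBL_zero, PBL_zero, kerBLPolyLT_eq,
    smul_eval, eval_aeval_X, smul_smul, map_sub, map_mul, Polynomial.aeval_C,
    algebraMap_eq, ← smul_eq_C_mul]
  congr 2
  ring

/-- For `g = 1` the formula `hBessel` gives `h_0 = 0`; then every `B_m^{(1,-1)}` is orthogonal
to `B_0 = 1`, so the functional vanishes, contradicting `h_1 ≠ 0`. -/
lemma ne_one_of_besselOrthogonal {g : ℝ} (hgn : ∀ n : ℕ, g + (n : ℝ) ≠ 0)
    {bfun : Polynomial ℝ →ₗ[ℝ] ℝ}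
    (hborth : ∀ n m : ℕ, n ≠ m → bfun (besselPoly g (-g) n * besselPoly g (-g) m) = 0)
    (hbnorm : ∀ n : ℕ, bfun (besselPoly g (-g) n * besselPoly g (-g) n) = hBessel g (-g) n) :
    g ≠ 1 := by
  rintro rfl
  let S : Polynomial.Sequence ℝ := ⟨besselPoly 1 (-1), degree_besselPoly_neg one_ne_zero hgn⟩
  have hzero : bfun = 0 := by
    refine LinearMap.ext_on_range (S.span S.isUnit_leadingCoeff) fun m => ?_
    change bfun (besselPoly 1 (-1) m) = 0
    rcases eq_or_ne m 0 with rfl | hm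
    · simpa [besselPoly_zero, hBessel, poch] using hbnorm 0
    · simpa [besselPoly_zero] using hborth m 0 hm
  have h1 := hbnorm 1
  norm_num [hzero, hBessel, poch] at h1

lemma eval_zero_kerBesselPolyLT (a b : ℝ) (n : ℕ) :
    (kerBesselPolyLT a b n).eval 0 = ∑ m ∈ Finset.range n, (hBessel a b m)⁻¹ := by
  simp [kerBesselPolyLT, Polynomial.eval_finsetSum, besselPoly_eval_zero]

lemma one_add_mul_eval_kerBesselPolyLT_ne_zero {g lam Γ : ℝ} (hg : g ≠ 0) (hg1 : g ≠ 1)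
    (hgn : ∀ n : ℕ, g + (n : ℝ) ≠ 0)
    (hlam : ∀ n : ℕ, 1 + lam * ((-1) ^ n * poch g n / ((Nat.factorial n : ℝ) * g * Γ)) ≠ 0)
    (n : ℕ) : 1 + lam / Γ * (kerBesselPolyLT g (-g) n).eval 0 ≠ 0 := by
  cases n with
  | zero => simp [kerBesselPolyLT]
  | succ n =>
    rw [eval_zero_kerBesselPolyLT, sum_range_succ_inv_hBessel_neg hg hg1 hgn]
    convert hlam n using 2
    ring

lemma uvarovPoly_besselPoly (a b lam : ℝ) (n : ℕ) :
    Polynomial.uvarovPoly (besselPoly a b) (hBessel a b) lam 0 n =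
      besselPoly a b n - Polynomial.C (lam / (1 + lam * (kerBesselPolyLT a b n).eval 0)) *
        kerBesselPolyLT a b n := by
  rw [Polynomial.uvarovPoly, besselPoly_eval_zero, mul_one]
  rfl

theorem besselLaguerre_uvarov_connection_general
    (g γ : ℝ) (hg : g ≠ 0)
    (hgn : ∀ n : ℕ, g + (n : ℝ) ≠ 0)
    (lam : ℝ)
    (hlam : ∀ n : ℕ, 1 + lam * ((-1) ^ n * poch g n /
      ((Nat.factorial n : ℝ) * g * Real.Gamma (g * γ))) ≠ 0)
    -- the univariate Bessel moment functional `b^{(g,-g)}`: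
    (bfun : Polynomial ℝ →ₗ[ℝ] ℝ)
    (hborth : ∀ n m : ℕ, n ≠ m →
      bfun (besselPoly g (-g) n * besselPoly g (-g) m) = 0)
    (hbnorm : ∀ n : ℕ,
      bfun (besselPoly g (-g) n * besselPoly g (-g) n) = hBessel g (-g) n) :
    -- for `0 < m ≤ n` nothing changes:
    (∀ n m : ℕ, 1 ≤ m → m ≤ n → QBL g γ lam n m = PBL g γ n m) ∧
    -- `Q_{n,0}` is the announced univariate polynomial in `x`:
    (∀ n : ℕ,
      QBL g γ lam n 0 =
        Polynomial.aeval (X 0 : MvPolynomial (Fin 2) ℝ)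
          (besselPoly g (-g) n -
            Polynomial.C ((lam / Real.Gamma (g * γ)) /
                (1 + (lam / Real.Gamma (g * γ)) * (kerBesselPolyLT g (-g) n).eval 0)) *
              kerBesselPolyLT g (-g) n)) ∧
    -- and it is orthogonal with respect to the univariate Uvarov modification
    -- `b^{(g,-g)} + λ̃ δ_0`:
    (∀ (n : ℕ) (p : Polynomial ℝ), p.degree < (n : ℕ) →
      bfun ((besselPoly g (-g) n -
          Polynomial.C ((lam / Real.Gamma (g * γ)) /
              (1 + (lam / Real.Gamma (g * γ)) * (kerBesselPolyLT g (-g) n).eval 0)) *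
            kerBesselPolyLT g (-g) n) * p) +
        (lam / Real.Gamma (g * γ)) *
          (((besselPoly g (-g) n -
            Polynomial.C ((lam / Real.Gamma (g * γ)) /
                (1 + (lam / Real.Gamma (g * γ)) * (kerBesselPolyLT g (-g) n).eval 0)) *
              kerBesselPolyLT g (-g) n) * p).eval 0) = 0) := by
  refine ⟨fun n m hm _ => QBL_of_ne_zero g γ lam n (Nat.one_le_iff_ne_zero.1 hm),
    QBL_zero g γ lam, fun n p hp => ?_⟩
  have hg1 : g ≠ 1 := ne_one_of_besselOrthogonal hgn hborth hbnorm
  rw [← uvarovPoly_besselPoly]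
  exact Polynomial.apply_uvarovPoly_mul_add_eval_eq_zero (degree_besselPoly_neg hg hgn) hborth
    hbnorm (hBessel_neg_ne_zero hg hg1 hgn)
    (one_add_mul_eval_kerBesselPolyLT_ne_zero hg hg1 hgn hlam n) hp

/-- Under the quasi-definiteness condition `λ_n ≠ 0`, the Uvarov
modification of `u^{(g,γ)}` only affects the polynomials with `m = 0`:
`Q^{(g,γ)}_{n,m} = P^{(g,γ)}_{n,m}` for `0 < m ≤ n`, while
`Q^{(g,γ)}_{n,0}(x,y) = B_n^{(g,-g)}(x) - (λ̃/(1+λ̃K_{n-1}(b^{(g,-g)};0,0)))K_{n-1}(b^{(g,-g)};0,x)`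
with `λ̃ = λ/Γ(gγ)`; it depends only on `x` and coincides with the `n`-th orthogonal
polynomial of the univariate Uvarov modification `b^{(g,-g)} + λ̃δ_0`. -/
theorem besselLaguerre_uvarov_connection
    (g γ : ℝ) (hg : g ≠ 0) (hgγ : -2 < g * γ)
    (hgn : ∀ n : ℕ, g + (n : ℝ) ≠ 0) (hgγn : ∀ n : ℕ, g * γ + (n : ℝ) ≠ 0)
    (u : MvPolynomial (Fin 2) ℝ →ₗ[ℝ] ℝ)
    (horth : ∀ n m n' m' : ℕ, m ≤ n → m' ≤ n' → (n, m) ≠ (n', m') →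
      u (PBL g γ n m * PBL g γ n' m') = 0)
    (hnorm : ∀ n m : ℕ, m ≤ n → u (PBL g γ n m * PBL g γ n m) = hBL g γ n m)
    (hspan : ∀ (N : ℕ) (p : MvPolynomial (Fin 2) ℝ), p.totalDegree ≤ N →
      p ∈ Submodule.span ℝ {q | ∃ n ≤ N, ∃ m ≤ n, q = PBL g γ n m})
    (lam : ℝ)
    (hlam : ∀ n : ℕ, 1 + lam * ((-1) ^ n * poch g n /
      ((Nat.factorial n : ℝ) * g * Real.Gamma (g * γ))) ≠ 0)
    -- the univariate Bessel moment functional `b^{(g,-g)}`: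
    (bfun : Polynomial ℝ →ₗ[ℝ] ℝ)
    (hborth : ∀ n m : ℕ, n ≠ m →
      bfun (besselPoly g (-g) n * besselPoly g (-g) m) = 0)
    (hbnorm : ∀ n : ℕ,
      bfun (besselPoly g (-g) n * besselPoly g (-g) n) = hBessel g (-g) n) :
    -- for `0 < m ≤ n` nothing changes:
    (∀ n m : ℕ, 1 ≤ m → m ≤ n → QBL g γ lam n m = PBL g γ n m) ∧
    -- `Q_{n,0}` is the announced univariate polynomial in `x`:
    (∀ n : ℕ,
      QBL g γ lam n 0 =
        Polynomial.aeval (X 0 : MvPolynomial (Fin 2) ℝ)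
          (besselPoly g (-g) n -
            Polynomial.C ((lam / Real.Gamma (g * γ)) /
                (1 + (lam / Real.Gamma (g * γ)) * (kerBesselPolyLT g (-g) n).eval 0)) *
              kerBesselPolyLT g (-g) n)) ∧
    -- and it is orthogonal with respect to the univariate Uvarov modification
    -- `b^{(g,-g)} + λ̃ δ_0`:
    (∀ (n : ℕ) (p : Polynomial ℝ), p.degree < (n : ℕ) →
      bfun ((besselPoly g (-g) n -
          Polynomial.C ((lam / Real.Gamma (g * γ)) /
              (1 + (lam / Real.Gamma (g * γ)) * (kerBesselPolyLT g (-g) n).eval 0)) *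
            kerBesselPolyLT g (-g) n) * p) +
        (lam / Real.Gamma (g * γ)) *
          (((besselPoly g (-g) n -
            Polynomial.C ((lam / Real.Gamma (g * γ)) /
                (1 + (lam / Real.Gamma (g * γ)) * (kerBesselPolyLT g (-g) n).eval 0)) *
              kerBesselPolyLT g (-g) n) * p).eval 0) = 0) :=
  besselLaguerre_uvarov_connection_general g γ hg hgn lam hlam bfun hborth hbnorm
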